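/- Let G be a finite abelian group, H ≤ G a subgroup, and suppose S ⊆ H is formally dual to T ⊆ Ĝ. Then T is invariant under translation by every element of the annihilator H^⊥ = {y ∈ Ĝ : y(x) = 1 for all x ∈ H}. -/

import Mathlib

/-!
The function `∑ w ∈ T, w` vanishes off `H`, since by formal duality its squared modulus at `x`
counts the representations `x = v - v'` with `v, v' ∈ S ⊆ H`. A character `h` trivial on `H`
therefore fixes it under multiplication, so `T + h` and `T` have the same character sum, and
linear independence of characters gives `T + h = T`.
-/

open scoped Classical

theorem LinearIndependent.finset_eq_of_sum_eq {ι R M : Type*} [Semiring R] [Nontrivial R]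
    [AddCommMonoid M] [Module R M] {v : ι → M} (hv : LinearIndependent R v) {s t : Finset ι}
    (hst : ∑ i ∈ s, v i = ∑ i ∈ t, v i) : s = t := by
  have hcoeff := linearIndependent_iff''ₛ.1 hv (s ∪ t)
    (fun i => if i ∈ s then 1 else 0) (fun i => if i ∈ t then 1 else 0)
    (fun i hi => by simp_all)
    (by simpa only [ite_smul, one_smul, zero_smul, Finset.sum_ite_mem, Finset.union_inter_cancel_left,
      Finset.union_inter_cancel_right] using hst)
  ext i
  have := hcoeff i
  split_ifs at this <;> simp_all

def IsFormallyDual {G : Type*} [AddCommGroup G] (S : Finset G) (T : Finset (AddChar G ℂ)) :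
    Prop :=
  ∀ x : G, ‖∑ w ∈ T, w x‖ ^ 2 =
    (T.card : ℝ) ^ 2 / (S.card : ℝ) * ((S ×ˢ S).filter fun p => x = p.1 - p.2).card

theorem IsFormallyDual.sum_apply_eq_zero_of_notMem {G : Type*} [AddCommGroup G] {H : AddSubgroup G}
    {S : Finset G} {T : Finset (AddChar G ℂ)} (hST : IsFormallyDual S T) (hSH : ∀ v ∈ S, v ∈ H)
    {x : G} (hx : x ∉ H) : ∑ w ∈ T, w x = 0 := by
  have hdiff : ((S ×ˢ S).filter fun p => x = p.1 - p.2) = ∅ := by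
    refine Finset.filter_eq_empty_iff.2 fun p hp hxp => hx ?_
    rw [Finset.mem_product] at hp
    exact hxp ▸ H.sub_mem (hSH _ hp.1) (hSH _ hp.2)
  simpa [hdiff] using hST x

theorem stmt_9_general {G : Type*} [AddCommGroup G] [Fintype G] (H : AddSubgroup G)
    (S : Finset G) (T : Finset (AddChar G ℂ))
    (hSH : ∀ v ∈ S, v ∈ H)
    (hdual : ∀ x : G,
      ‖∑ w ∈ T, w x‖ ^ 2 =
        (T.card : ℝ) ^ 2 / (S.card : ℝ) *
          ((S ×ˢ S).filter fun p => x = p.1 - p.2).card) :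
    ∀ h : AddChar G ℂ, (∀ x ∈ H, h x = 1) → T.image (fun w => w + h) = T := by
  intro h hh
  refine (AddChar.linearIndependent G ℂ).finset_eq_of_sum_eq (funext fun x => ?_)
  rw [Finset.sum_apply, Finset.sum_apply, Finset.sum_image fun _ _ _ _ => add_right_cancel]
  simp only [AddChar.add_apply, ← Finset.sum_mul]
  by_cases hx : x ∈ H
  · rw [hh x hx, mul_one]
  · rw [IsFormallyDual.sum_apply_eq_zero_of_notMem hdual hSH hx, zero_mul]

theorem stmt_9 {G : Type*} [AddCommGroup G] [Fintype G] (H : AddSubgroup G)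
    (S : Finset G) (T : Finset (AddChar G ℂ))
    (hS : S.Nonempty) (hSH : ∀ v ∈ S, v ∈ H)
    (hdual : ∀ x : G,
      ‖∑ w ∈ T, w x‖ ^ 2 =
        (T.card : ℝ) ^ 2 / (S.card : ℝ) *
          ((S ×ˢ S).filter fun p => x = p.1 - p.2).card) :
    ∀ h : AddChar G ℂ, (∀ x ∈ H, h x = 1) → T.image (fun w => w + h) = T :=
  stmt_9_general H S T hSH hdual
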